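/- Let N ≥ 1 and assume h : ℝ^N × ℝ² → ℝ is continuous with h(x, b, a) − h(x, a, b) ≥ f(a − b) for all a ≥ b and all x, where f : ℝ → [0,∞) is convex, f(t) = 0 for t ≤ 0, and f(t) ≥ ε t^η for t ≥ 0 with constants ε > 0, η > 1. If (u, v) is a bounded classical solution of −Δu = h(x,u,v), −Δv = h(x,v,u) on ℝ^N, then u = v. -/

import Mathlib

/-!
Put `ψ = u - v`. Subtracting the equations and using the interaction condition gives
`Δψ ≥ f(ψ) ≥ ε ψ^η` wherever `ψ > 0`. Since `ψ` is bounded above, for every `κ > 0` the function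
`ψ - κ|x - x₀|²` tends to `-∞` at infinity and so attains its maximum at some `x₁`; there
`Δψ(x₁) ≤ 2Nκ` while `ψ(x₁) ≥ ψ(x₀)`. If `ψ(x₀) > 0` this gives `ε ψ(x₀)^η ≤ 2Nκ` for every
`κ > 0`, which is absurd. So `u ≤ v`, and `v ≤ u` by symmetry.
-/

open Real

noncomputable def lap {N : ℕ} (u : EuclideanSpace ℝ (Fin N) → ℝ)
    (x : EuclideanSpace ℝ (Fin N)) : ℝ :=
  ∑ i : Fin N, fderiv ℝ (fun y => fderiv ℝ u y (EuclideanSpace.single i (1:ℝ))) x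
    (EuclideanSpace.single i (1:ℝ))

open Filter Topology Set

theorem IsLocalMax.deriv_deriv_nonpos {g : ℝ → ℝ} {a : ℝ} (hmax : IsLocalMax g a)
    (hg : ContinuousAt g a) : deriv (deriv g) a ≤ 0 := by
  by_contra! hpos
  -- the second-derivative test makes `a` a local minimum as well, so `g` is locally constant
  have hconst : g =ᶠ[𝓝 a] fun _ => g a :=
    ((isLocalMin_of_deriv_deriv_pos hpos hmax.deriv_eq_zero hg).and hmax).mono
      fun _ h => le_antisymm h.2 h.1
  have : deriv (deriv g) a = 0 := by
    rw [hconst.deriv.deriv_eq]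
    simp
  exact hpos.ne' this

section Line

variable {E : Type*} [NormedAddCommGroup E] [NormedSpace ℝ E] {ψ : E → ℝ}

theorem ContDiff.differentiable_fderiv_apply (hψ : ContDiff ℝ 2 ψ) (e : E) :
    Differentiable ℝ fun y => fderiv ℝ ψ y e :=
  ((hψ.fderiv_right (m := 1) (by norm_num)).clm_apply contDiff_const).differentiable one_ne_zero

theorem HasDerivAt.comp_line {F : Type*} [NormedAddCommGroup F] [NormedSpace ℝ F] {φ : E → F}
    {x e : E} {t : ℝ} (hφ : DifferentiableAt ℝ φ (x + t • e)) :
    HasDerivAt (fun s : ℝ => φ (x + s • e)) (fderiv ℝ φ (x + t • e) e) t :=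
  hφ.hasFDerivAt.comp_hasDerivAt t (by simpa using ((hasDerivAt_id t).smul_const e).const_add x)

theorem fderiv_fderiv_apply_eq_deriv_deriv (hψ : ContDiff ℝ 2 ψ) (x e : E) :
    fderiv ℝ (fun y => fderiv ℝ ψ y e) x e = deriv (deriv fun t : ℝ => ψ (x + t • e)) 0 := by
  have hderiv : deriv (fun t : ℝ => ψ (x + t • e)) = fun t : ℝ => fderiv ℝ ψ (x + t • e) e :=
    funext fun t => (HasDerivAt.comp_line (hψ.differentiable two_ne_zero _)).deriv
  rw [hderiv, (HasDerivAt.comp_line (hψ.differentiable_fderiv_apply e _)).deriv, zero_smul,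
    add_zero]

end Line

theorem deriv_deriv_const_mul_norm_sub_sq {E : Type*} [NormedAddCommGroup E]
    [InnerProductSpace ℝ E] (κ : ℝ) (x₀ x e : E) :
    deriv (deriv fun t : ℝ => κ * ‖x + t • e - x₀‖ ^ 2) 0 = 2 * κ * ‖e‖ ^ 2 := by
  have hline (t : ℝ) : HasDerivAt (fun s : ℝ => x + s • e - x₀) e t := by
    simpa using (((hasDerivAt_id t).smul_const e).const_add x).sub_const x₀
  have hderiv : deriv (fun t : ℝ => κ * ‖x + t • e - x₀‖ ^ 2)
      = fun t => κ * (2 * inner ℝ (x + t • e - x₀) e) :=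
    funext fun t => ((hline t).norm_sq.const_mul κ).deriv
  rw [hderiv, (((hline 0).inner ℝ (hasDerivAt_const 0 e)).const_mul 2 |>.const_mul κ).deriv]
  simp
  ring

variable {N : ℕ}

theorem lap_nonpos_of_isLocalMax {ψ : EuclideanSpace ℝ (Fin N) → ℝ}
    {x : EuclideanSpace ℝ (Fin N)} (hψ : ContDiff ℝ 2 ψ) (hmax : IsLocalMax ψ x) : lap ψ x ≤ 0 := by
  refine Finset.sum_nonpos fun i _ => ?_
  have hline : Continuous fun t : ℝ => x + t • EuclideanSpace.single i (1 : ℝ) := by fun_prop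
  rw [fderiv_fderiv_apply_eq_deriv_deriv hψ]
  refine IsLocalMax.deriv_deriv_nonpos ?_ (hψ.continuous.comp hline).continuousAt
  exact IsLocalMax.comp_continuous (by simpa using hmax) hline.continuousAt

theorem lap_sub {u v : EuclideanSpace ℝ (Fin N) → ℝ} (hu : ContDiff ℝ 2 u) (hv : ContDiff ℝ 2 v)
    (x : EuclideanSpace ℝ (Fin N)) : lap (u - v) x = lap u x - lap v x := by
  simp only [lap, ← Finset.sum_sub_distrib]
  refine Finset.sum_congr rfl fun i _ => ?_
  set e := EuclideanSpace.single i (1 : ℝ)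
  have hfderiv : (fun y => fderiv ℝ (u - v) y e)
      = (fun y => fderiv ℝ u y e) - fun y => fderiv ℝ v y e :=
    funext fun y => by
      rw [fderiv_sub (hu.differentiable two_ne_zero y) (hv.differentiable two_ne_zero y)]
      rfl
  rw [hfderiv,
    fderiv_sub (hu.differentiable_fderiv_apply e x) (hv.differentiable_fderiv_apply e x)]
  rfl

theorem lap_const_mul_norm_sub_sq (κ : ℝ) (x₀ x : EuclideanSpace ℝ (Fin N)) :
    lap (fun y => κ * ‖y - x₀‖ ^ 2) x = 2 * N * κ := by
  have hq : ContDiff ℝ 2 fun y : EuclideanSpace ℝ (Fin N) => κ * ‖y - x₀‖ ^ 2 :=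
    contDiff_const.mul ((contDiff_norm_sq ℝ).comp (contDiff_id.sub contDiff_const))
  simp only [lap, fderiv_fderiv_apply_eq_deriv_deriv hq, deriv_deriv_const_mul_norm_sub_sq]
  simp
  ring

theorem exists_le_apply_and_lap_le {ψ : EuclideanSpace ℝ (Fin N) → ℝ} (hψ : ContDiff ℝ 2 ψ)
    (hbdd : BddAbove (range ψ)) (x₀ : EuclideanSpace ℝ (Fin N)) {κ : ℝ} (hκ : 0 < κ) :
    ∃ x₁, ψ x₀ ≤ ψ x₁ ∧ lap ψ x₁ ≤ 2 * N * κ := by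
  obtain ⟨M, hM⟩ := hbdd
  set q := fun y : EuclideanSpace ℝ (Fin N) => κ * ‖y - x₀‖ ^ 2 with hq_def
  have hq : ContDiff ℝ 2 q :=
    contDiff_const.mul ((contDiff_norm_sq ℝ).comp (contDiff_id.sub contDiff_const))
  have hq_top : Tendsto q (cocompact _) atTop := by
    simp only [hq_def, ← dist_eq_norm]
    exact ((tendsto_pow_atTop two_ne_zero).comp
      (tendsto_dist_right_cocompact_atTop x₀)).const_mul_atTop hκ
  have hcoercive : Tendsto (ψ - q) (cocompact _) atBot := by
    rw [sub_eq_add_neg]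
    exact tendsto_atBot_add_left_of_ge _ M (fun y => hM (mem_range_self y))
      (tendsto_neg_atTop_atBot.comp hq_top)
  obtain ⟨x₁, hx₁⟩ := (hψ.continuous.sub hq.continuous).exists_forall_ge' x₀
    (hcoercive.eventually_le_atBot _)
  refine ⟨x₁, ?_, ?_⟩
  · have hq₁ : 0 ≤ q x₁ := by positivity
    have := hx₁ x₀
    simp only [Pi.sub_apply, hq_def, sub_self, norm_zero] at this
    linarith
  · have := lap_nonpos_of_isLocalMax (ψ := ψ - q) (hψ.sub hq) (Eventually.of_forall hx₁)
    rw [lap_sub hψ hq, lap_const_mul_norm_sub_sq] at this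
    linarith

theorem nonpos_of_lap_ge_rpow {ψ : EuclideanSpace ℝ (Fin N) → ℝ} {ε η : ℝ} (hε : 0 < ε)
    (hη : 0 ≤ η) (hψ : ContDiff ℝ 2 ψ) (hbdd : BddAbove (range ψ))
    (hlap : ∀ x, 0 < ψ x → ε * ψ x ^ η ≤ lap ψ x) (x₀ : EuclideanSpace ℝ (Fin N)) :
    ψ x₀ ≤ 0 := by
  by_contra! hpos
  set c := ε * ψ x₀ ^ η
  have hc : 0 < c := mul_pos hε (rpow_pos_of_pos hpos η)
  obtain ⟨x₁, hle, hlap₁⟩ := exists_le_apply_and_lap_le hψ hbdd x₀ (κ := c / (2 * N + 1))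
    (by positivity)
  have hc_le : c ≤ lap ψ x₁ :=
    (mul_le_mul_of_nonneg_left (rpow_le_rpow hpos.le hle hη) hε.le).trans
      (hlap x₁ (hpos.trans_le hle))
  have : 2 * N * (c / (2 * N + 1)) < c := by
    rw [mul_div_assoc', div_lt_iff₀ (by positivity)]
    linarith
  linarith

theorem bddBelow_and_bddAbove_range_of_abs_le {α : Type*} {w : α → ℝ}
    (hw : ∃ M, ∀ x, |w x| ≤ M) : BddBelow (range w) ∧ BddAbove (range w) := by
  obtain ⟨M, hM⟩ := hw
  exact isBounded_iff_bddBelow_bddAbove.1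
    (isBounded_iff_forall_norm_le.2 ⟨M, forall_mem_range.2 hM⟩)

theorem le_of_neg_lap_eq_interaction {h : EuclideanSpace ℝ (Fin N) → ℝ → ℝ → ℝ} {f : ℝ → ℝ}
    {ε η : ℝ} (hε : 0 < ε) (hη : 0 ≤ η) (hf_lb : ∀ t : ℝ, 0 ≤ t → f t ≥ ε * t ^ η)
    (hmono : ∀ x a b, b ≤ a → h x b a - h x a b ≥ f (a - b))
    {u v : EuclideanSpace ℝ (Fin N) → ℝ} (hu : ContDiff ℝ 2 u) (hv : ContDiff ℝ 2 v)
    (hu_above : BddAbove (range u)) (hv_below : BddBelow (range v))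
    (hequ : ∀ x, -lap u x = h x (u x) (v x)) (heqv : ∀ x, -lap v x = h x (v x) (u x)) :
    u ≤ v := by
  obtain ⟨Mu, hMu⟩ := hu_above
  obtain ⟨mv, hmv⟩ := hv_below
  have hbdd : BddAbove (range (u - v)) :=
    ⟨Mu - mv, forall_mem_range.2 fun x => sub_le_sub (hMu (mem_range_self x))
      (hmv (mem_range_self x))⟩
  intro x
  rw [← sub_nonpos]
  refine nonpos_of_lap_ge_rpow (ψ := u - v) hε hη (hu.sub hv) hbdd (fun y hy => ?_) x
  rw [Pi.sub_apply] at hy ⊢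
  rw [lap_sub hu hv]
  linarith [hequ y, heqv y, hmono y (u y) (v y) (sub_nonneg.1 hy.le), hf_lb _ hy.le]

theorem symmetry_keller_osserman_interaction_general (N : ℕ)
    (h : EuclideanSpace ℝ (Fin N) → ℝ → ℝ → ℝ) (f : ℝ → ℝ) (ε η : ℝ)
    (hε : 0 < ε) (hη : 1 < η)
    (hf_lb : ∀ t : ℝ, 0 ≤ t → f t ≥ ε * t ^ η)
    (hmono : ∀ x a b, b ≤ a → h x b a - h x a b ≥ f (a - b))
    (u v : EuclideanSpace ℝ (Fin N) → ℝ)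
    (hu : ContDiff ℝ 2 u) (hv : ContDiff ℝ 2 v)
    (hub : ∃ M, ∀ x, |u x| ≤ M) (hvb : ∃ M, ∀ x, |v x| ≤ M)
    (hequ : ∀ x, -lap u x = h x (u x) (v x))
    (heqv : ∀ x, -lap v x = h x (v x) (u x)) :
    u = v := by
  obtain ⟨hu_below, hu_above⟩ := bddBelow_and_bddAbove_range_of_abs_le hub
  obtain ⟨hv_below, hv_above⟩ := bddBelow_and_bddAbove_range_of_abs_le hvb
  have hη₀ : 0 ≤ η := zero_le_one.trans hη.le
  exact le_antisymm
    (le_of_neg_lap_eq_interaction hε hη₀ hf_lb hmono hu hv hu_above hv_below hequ heqv)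
    (le_of_neg_lap_eq_interaction hε hη₀ hf_lb hmono hv hu hv_above hu_below heqv hequ)

theorem symmetry_keller_osserman_interaction (N : ℕ) (hN : 1 ≤ N)
    (h : EuclideanSpace ℝ (Fin N) → ℝ → ℝ → ℝ) (f : ℝ → ℝ) (ε η : ℝ)
    (hε : 0 < ε) (hη : 1 < η)
    (hf_nonneg : ∀ t, 0 ≤ f t)
    (hf_convex : ConvexOn ℝ Set.univ f)
    (hf_zero : ∀ t : ℝ, t ≤ 0 → f t = 0)
    (hf_lb : ∀ t : ℝ, 0 ≤ t → f t ≥ ε * t ^ η)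
    (hcont : Continuous fun p : EuclideanSpace ℝ (Fin N) × ℝ × ℝ => h p.1 p.2.1 p.2.2)
    (hmono : ∀ x a b, b ≤ a → h x b a - h x a b ≥ f (a - b))
    (u v : EuclideanSpace ℝ (Fin N) → ℝ)
    (hu : ContDiff ℝ 2 u) (hv : ContDiff ℝ 2 v)
    (hub : ∃ M, ∀ x, |u x| ≤ M) (hvb : ∃ M, ∀ x, |v x| ≤ M)
    (hequ : ∀ x, -lap u x = h x (u x) (v x))
    (heqv : ∀ x, -lap v x = h x (v x) (u x)) :
    u = v :=
  symmetry_keller_osserman_interaction_general N h f ε η hε hη hf_lb hmono u v hu hv hub hvb hequ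
    heqv
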